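/- For all words u, v over a finite alphabet, ρ(u·v) ≤ ρ(u) + ρ(v). -/

import Mathlib

variable {A : Type*}

/-- Simon's congruence of order `k`: `u` and `v` have the same subwords of length ≤ k. -/
def SimonCong (k : ℕ) (u v : List A) : Prop :=
  ∀ s : List A, s.length ≤ k → (s.Sublist u ↔ s.Sublist v)

/-- Subword distance `δ(u,v) = sup {k | u ∼ₖ v} ∈ ℕ∞`. -/
noncomputable def sdelta (u v : List A) : ℕ∞ :=
  sSup {d : ℕ∞ | ∃ k : ℕ, d = k ∧ SimonCong k u v}

/-- Right side distance `r(u,t) = δ(u, u·t)`. -/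
noncomputable def rdist (u t : List A) : ℕ∞ := sdelta u (u ++ t)

/-- Left side distance `ℓ(t,u) = δ(t·u, u)`. -/
noncomputable def ldist (t u : List A) : ℕ∞ := sdelta (t ++ u) u

/-- Piecewise complexity `h(u)`: least `n` such that any `v` with `u ∼ₙ v` equals `u`. -/
noncomputable def pcHeight (u : List A) : ℕ :=
  sInf {n : ℕ | ∀ v : List A, SimonCong n u v → v = u}

/-- `u` is `m`-reduced: no strict subword of `u` is `∼ₘ`-equivalent to `u`. -/
def Reduced (m : ℕ) (u : List A) : Prop :=
  ∀ u' : List A, u'.Sublist u → u' ≠ u → ¬ SimonCong m u u'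

/-- Piecewise minimality index `ρ(u)`: least `m` such that `u` is `m`-reduced. -/
noncomputable def pcRho (u : List A) : ℕ := sInf {m : ℕ | Reduced m u}

/-- An `A`-arch: contains every letter of `A` but no strict prefix does. -/
def IsArch (A : Type*) [Fintype A] (s : List A) : Prop :=
  (∀ a : A, a ∈ s) ∧ ∀ t : List A, t <+: s → t ≠ s → ∃ a : A, a ∉ t

/-- The infinite periodic word `u^ω`. -/
def omegaWord (u : List A) (hu : u ≠ []) (i : ℕ) : A :=
  u.get ⟨i % u.length, Nat.mod_lt i (List.length_pos_iff.mpr hu)⟩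

/-- The arch-jumping function `α` on `u^ω`: `α(i)` is the least `j > i` such that
every letter of `A` occurs among positions `i, …, j-1` of `u^ω`. -/
noncomputable def archJump (u : List A) (hu : u ≠ []) (i : ℕ) : ℕ :=
  sInf {j : ℕ | i < j ∧ ∀ a : A, ∃ m : ℕ, i ≤ m ∧ m < j ∧ omegaWord u hu m = a}

/-- `p` is an arch-period of `u` starting at `i`. -/
def IsArchPeriodAt (u : List A) (hu : u ≠ []) (i p : ℕ) : Prop :=
  0 < p ∧ ∃ k : ℕ, (archJump u hu)^[k + p] i ≡ (archJump u hu)^[k] i [MOD u.length]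

/-- The arch-period of `u`: the least arch-period starting at 0. -/
noncomputable def archPeriod (u : List A) (hu : u ≠ []) : ℕ :=
  sInf {p : ℕ | IsArchPeriodAt u hu 0 p}

/-- `K_u`: the least `k` with `α^{k+p}(0) ≡ α^k(0) (mod L)`. -/
noncomputable def archTransientIndex (u : List A) (hu : u ≠ []) : ℕ :=
  sInf {k : ℕ |
    (archJump u hu)^[k + archPeriod u hu] 0 ≡ (archJump u hu)^[k] 0 [MOD u.length]}

/-- The transient `T_u = α^{K_u}(0)`. -/
noncomputable def archTransient (u : List A) (hu : u ≠ []) : ℕ :=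
  (archJump u hu)^[archTransientIndex u hu] 0

/-- The span `Δ_u = α^{K_u+p_u}(0) − α^{K_u}(0)`. -/
noncomputable def archSpan (u : List A) (hu : u ≠ []) : ℕ :=
  (archJump u hu)^[archTransientIndex u hu + archPeriod u hu] 0 - archTransient u hu

/-- `u^n`: the `n`-fold concatenation of `u`. -/
def listPow (u : List A) (n : ℕ) : List A := (List.replicate n u).flatten


/-! If `u` is `m`-reduced and `u'` is a strict subword of `u`, some `s ≼ u` with `|s| ≤ m` is not a
subword of `u'`. If `v` is `n`-reduced, it has a subword `t` with `|t| ≤ n` that cannot be extended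
on the left: factor `v` from the right into arches, each the shortest suffix of what remains that
contains all its letters, and let `t` collect their first letters; deleting the leftmost arch gives
a strict subword `∼_{|t|-1}`-equivalent to `v`, so `|t| - 1 < n`. Then `s·t ≼ uv` but `s·t ⋠ u'v'` for
every `v' ≼ v`, hence `uv` is `(m+n)`-reduced. The case `u' = u` is the mirror image. -/

open List

namespace SimonCong

variable {k : ℕ} {u v : List A}

lemma symm (h : SimonCong k u v) : SimonCong k v u := fun s hs => (h s hs).symm

lemma mono {k' : ℕ} (h : SimonCong k u v) (hk : k' ≤ k) : SimonCong k' u v :=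
  fun s hs => h s (hs.trans hk)

lemma zero (u v : List A) : SimonCong 0 u v := by
  intro s hs
  rw [length_eq_zero_iff.mp (Nat.le_zero.mp hs)]
  simp

lemma reverse (h : SimonCong k u v) : SimonCong k u.reverse v.reverse := by
  intro s hs
  simpa only [sublist_reverse_iff] using h s.reverse (by simpa using hs)

/-- The subwords of `z ++ r` of length `≤ k + 1` either have a prefix of length `≤ k` taken in `z`
and the rest in `r`, or lie in `z` and then their last letter can be read in `r` instead. -/
lemma sublist_append_of_subset {z z' r : List A} (h : SimonCong k z z') (hz : ∀ c ∈ z, c ∈ r)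
    {s : List A} (hs : s.length ≤ k + 1) (hsub : s <+ z ++ r) : s <+ z' ++ r := by
  obtain ⟨P, Q, rfl, hP, hQ⟩ := sublist_append_iff.mp hsub
  rcases eq_or_ne Q [] with rfl | hQ_ne
  · rw [append_nil] at hs ⊢
    rcases eq_nil_or_concat P with rfl | ⟨P₀, c, rfl⟩
    · exact nil_sublist _
    rw [concat_eq_append] at hs hP ⊢
    have hP₀_len : P₀.length ≤ k := by
      simp only [length_append, length_singleton] at hs
      omega
    have hP₀ : P₀ <+ z' := (h P₀ hP₀_len).mp ((sublist_append_left _ _).trans hP)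
    exact hP₀.append (singleton_sublist.mpr (hz c (hP.subset (by simp))))
  · have : P.length ≤ k := by
      have := length_pos_iff.mpr hQ_ne
      simp only [length_append] at hs
      omega
    exact ((h P this).mp hP).append hQ

lemma append_of_subset {z z' r : List A} (h : SimonCong k z z') (hz : ∀ c ∈ z, c ∈ r)
    (hz' : ∀ c ∈ z', c ∈ r) : SimonCong (k + 1) (z ++ r) (z' ++ r) := fun _ hs =>
  ⟨sublist_append_of_subset h hz hs, sublist_append_of_subset h.symm hz' hs⟩

end SimonCong

namespace Reduced

variable {m n : ℕ} {u : List A}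

lemma mono (h : Reduced m u) (hmn : m ≤ n) : Reduced n u :=
  fun u' hsub hne hc => h u' hsub hne (hc.mono hmn)

lemma reverse (h : Reduced m u) : Reduced m u.reverse := by
  intro u' hsub hne hc
  refine h u'.reverse (by simpa using hsub.reverse) (fun he => hne ?_) (by simpa using hc.reverse)
  rw [← he, reverse_reverse]

lemma exists_sublist_not_sublist (h : Reduced m u) {u' : List A} (hsub : u' <+ u) (hne : u' ≠ u) :
    ∃ s : List A, s.length ≤ m ∧ s <+ u ∧ ¬ s <+ u' := by
  have := h u' hsub hne
  simp only [SimonCong, not_forall, exists_prop] at this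
  obtain ⟨s, hs, hiff⟩ := this
  refine ⟨s, hs, ?_⟩
  by_contra! hsu
  exact hiff ⟨hsu, fun hsu' => hsu'.trans hsub⟩

end Reduced

lemma reduced_length (u : List A) : Reduced u.length u := fun _ hsub hne hc =>
  hne (hsub.antisymm ((hc u le_rfl).mp (Sublist.refl u)))

lemma reduced_pcRho (u : List A) : Reduced (pcRho u) u :=
  Nat.sInf_mem (s := {m | Reduced m u}) ⟨u.length, reduced_length u⟩

lemma not_reduced_zero {v : List A} (hv : v ≠ []) : ¬ Reduced 0 v :=
  fun h => h [] (nil_sublist v) hv.symm (SimonCong.zero v [])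

lemma not_reduced_succ_append {k : ℕ} {z r : List A} (h : ¬ Reduced k z) (hz : ∀ c ∈ z, c ∈ r) :
    ¬ Reduced (k + 1) (z ++ r) := by
  simp only [Reduced, not_forall, not_not, exists_prop] at h
  obtain ⟨w, hw, hne, hc⟩ := h
  exact fun hred => hred (w ++ r) (hw.append (Sublist.refl r))
    (fun he => hne (append_cancel_right he))
    (hc.append_of_subset hz fun c hc => hz c (hw.subset hc))

lemma exists_eq_append_cons_not_mem {v : List A} (hv : v ≠ []) :
    ∃ z a r, v = z ++ a :: r ∧ a ∉ r ∧ ∀ c ∈ z, c ∈ a :: r := by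
  induction v with
  | nil => exact absurd rfl hv
  | cons x v ih =>
    rcases eq_or_ne v [] with rfl | hv₀
    · exact ⟨[], x, [], rfl, not_mem_nil, by simp⟩
    obtain ⟨z, a, r, rfl, har, hz⟩ := ih hv₀
    by_cases hx : x ∈ a :: r
    · exact ⟨x :: z, a, r, rfl, har, forall_mem_cons.mpr ⟨hx, hz⟩⟩
    · refine ⟨[], x, z ++ a :: r, rfl, ?_, by simp⟩
      simp only [mem_append]
      exact fun h => hx (h.elim (hz x) id)

lemma sublist_of_cons_sublist_append_cons {a : A} {l r z : List A} (h : a :: l <+ r ++ a :: z)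
    (ha : a ∉ r) : l <+ z := by
  induction r with
  | nil => exact cons_sublist_cons.mp h
  | cons x r ih =>
    have hax : a ≠ x := fun he => ha (he ▸ mem_cons_self)
    exact ih (h.of_cons_of_ne hax) (fun har => ha (mem_cons_of_mem x har))

lemma sublist_of_append_singleton_sublist {a : A} {l z r : List A} (h : l ++ [a] <+ z ++ a :: r)
    (ha : a ∉ r) : l <+ z := by
  have h' : a :: l.reverse <+ r.reverse ++ a :: z.reverse := by simpa using h.reverse
  simpa using (sublist_of_cons_sublist_append_cons h' (by simpa using ha)).reverse

theorem exists_sublist_forall_not_cons_sublist (v : List A) :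
    ∃ t, t <+ v ∧ (∀ b, ¬ b :: t <+ v) ∧ (t ≠ [] → ¬ Reduced (t.length - 1) v) := by
  rcases eq_or_ne v [] with rfl | hv
  · exact ⟨[], nil_sublist _, fun b hb => by simpa using hb.length_le, fun h => absurd rfl h⟩
  obtain ⟨z, a, r, rfl, har, hz⟩ := exists_eq_append_cons_not_mem hv
  have : z.length < (z ++ a :: r).length := by simp
  obtain ⟨t, ht, hext, hred⟩ := exists_sublist_forall_not_cons_sublist z
  refine ⟨t ++ [a], ht.append (singleton_sublist.mpr mem_cons_self), ?_, fun _ => ?_⟩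
  · exact fun b hb => hext b (sublist_of_append_singleton_sublist hb har)
  rw [length_append, length_singleton, Nat.add_sub_cancel]
  rcases eq_or_ne t [] with rfl | ht_ne
  · exact not_reduced_zero (by simp)
  have := not_reduced_succ_append (hred ht_ne) hz
  rwa [Nat.sub_add_cancel (length_pos_iff.mpr ht_ne)] at this
termination_by v.length

lemma Reduced.exists_sublist_forall_not_cons_sublist {n : ℕ} {v : List A} (h : Reduced n v) :
    ∃ t, t <+ v ∧ (∀ b, ¬ b :: t <+ v) ∧ t.length ≤ n := by
  obtain ⟨t, ht, hext, hred⟩ := _root_.exists_sublist_forall_not_cons_sublist v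
  refine ⟨t, ht, hext, ?_⟩
  rcases eq_or_ne t [] with rfl | ht_ne
  · exact Nat.zero_le n
  by_contra! hlt
  exact hred ht_ne (h.mono (by omega))

lemma append_not_sublist_append {s t u' v v' : List A} (hv' : v' <+ v) (hs : ¬ s <+ u')
    (ht : ∀ b, ¬ b :: t <+ v) : ¬ s ++ t <+ u' ++ v' := by
  intro h
  obtain ⟨P, Q, hPQ, hP, hQ⟩ := sublist_append_iff.mp h
  rcases append_eq_append_iff.mp hPQ with ⟨c, rfl, -⟩ | ⟨c, rfl, rfl⟩
  · exact hs ((sublist_append_left s c).trans hP)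
  rcases c with _ | ⟨b, c⟩
  · exact hs (by simpa using hP)
  exact ht b ((cons_sublist_cons.mpr (sublist_append_right c t)).trans (hQ.trans hv'))

lemma not_simonCong_append_of_ne_left {m n : ℕ} {u v u' v' : List A} (hu : Reduced m u)
    (hv : Reduced n v) (hu' : u' <+ u) (hne : u' ≠ u) (hv' : v' <+ v) :
    ¬ SimonCong (m + n) (u ++ v) (u' ++ v') := by
  obtain ⟨s, hs_len, hs, hs'⟩ := hu.exists_sublist_not_sublist hu' hne
  obtain ⟨t, ht, hext, ht_len⟩ := hv.exists_sublist_forall_not_cons_sublist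
  intro hc
  refine append_not_sublist_append hv' hs' hext ((hc (s ++ t) ?_).mp (hs.append ht))
  rw [length_append]
  omega

lemma Reduced.append {m n : ℕ} {u v : List A} (hu : Reduced m u) (hv : Reduced n v) :
    Reduced (m + n) (u ++ v) := by
  intro w hw hne hc
  obtain ⟨u', v', rfl, hu', hv'⟩ := sublist_append_iff.mp hw
  by_cases hu_eq : u' = u
  · subst hu_eq
    have hv_ne : v'.reverse ≠ v.reverse := fun he => hne (by rw [reverse_inj.mp he])
    refine not_simonCong_append_of_ne_left hv.reverse hu.reverse hv'.reverse hv_ne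
      (Sublist.refl _) ?_
    simpa [Nat.add_comm] using hc.reverse
  · exact not_simonCong_append_of_ne_left hu hv hu' hu_eq hv' hc

theorem stmt4_general {A : Type*} (u v : List A) :
    pcRho (u ++ v) ≤ pcRho u + pcRho v :=
  Nat.sInf_le ((reduced_pcRho u).append (reduced_pcRho v))

/-- convexity of `ρ` w.r.t. concatenation. -/
theorem stmt4 {A : Type*} [Fintype A] (u v : List A) :
    pcRho (u ++ v) ≤ pcRho u + pcRho v :=
  stmt4_general u v
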